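/- arXiv:2406.14147 — 4 statements merged into one kernel-verified Lean document; each statement's English description precedes it below -/
import Mathlib

section
/- Let A1, B1, A2, B2 be four points in R^3 with |A1B1| = |A2B2| and |B1A2| = |B2A1|. Let N_A be the midpoint of segment A1A2 and N_B the midpoint of segment B1B2, and suppose N_A ≠ N_B. Then the line through N_A and N_B is perpendicular to the line through A1 and A2. -/
/-!
Four times the inner product `⟪N_B - N_A, A₂ - A₁⟫` is an alternating sum of the squared side
lengths `|A₁B₁|² - |A₂B₂|² + |B₂A₁|² - |B₁A₂|²` of the skew quadrilateral `A₁B₁A₂B₂`, so equal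
opposite sides force it to vanish.
-/

section
variable {E : Type*} [NormedAddCommGroup E] [InnerProductSpace ℝ E]

theorem four_mul_inner_midpoint_sub_midpoint (a₁ b₁ a₂ b₂ : E) :
    4 * inner ℝ (midpoint ℝ b₁ b₂ - midpoint ℝ a₁ a₂) (a₂ - a₁) =
      (‖a₁ - b₁‖ ^ 2 - ‖a₂ - b₂‖ ^ 2) + (‖b₂ - a₁‖ ^ 2 - ‖b₁ - a₂‖ ^ 2) := by
  have hmid : midpoint ℝ b₁ b₂ - midpoint ℝ a₁ a₂ = (2 : ℝ)⁻¹ • (b₁ + b₂ - (a₁ + a₂)) := by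
    rw [midpoint_eq_smul_add, midpoint_eq_smul_add, ← smul_sub, invOf_eq_inv]
  rw [hmid, real_inner_smul_left]
  simp only [norm_sub_sq_real, inner_sub_left, inner_add_left, inner_sub_right,
    real_inner_self_eq_norm_sq]
  rw [real_inner_comm b₁ a₁, real_inner_comm b₂ a₂, real_inner_comm a₂ a₁]
  ring

theorem inner_midpoint_sub_midpoint_eq_zero {a₁ b₁ a₂ b₂ : E}
    (h₁ : dist a₁ b₁ = dist a₂ b₂) (h₂ : dist b₁ a₂ = dist b₂ a₁) :
    inner ℝ (midpoint ℝ b₁ b₂ - midpoint ℝ a₁ a₂) (a₂ - a₁) = 0 := by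
  have h := four_mul_inner_midpoint_sub_midpoint a₁ b₁ a₂ b₂
  rw [dist_eq_norm, dist_eq_norm] at h₁ h₂
  rw [h₁, h₂, sub_self, sub_self, add_zero] at h
  linarith

end

theorem stmt_0_general (A1 B1 A2 B2 : EuclideanSpace ℝ (Fin 3))
    (h1 : dist A1 B1 = dist A2 B2) (h2 : dist B1 A2 = dist B2 A1)
    (NA NB : EuclideanSpace ℝ (Fin 3))
    (hNA : NA = midpoint ℝ A1 A2) (hNB : NB = midpoint ℝ B1 B2) :
    inner ℝ (NB - NA) (A2 - A1) = (0 : ℝ) := by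
  subst hNA hNB
  exact inner_midpoint_sub_midpoint_eq_zero h1 h2

theorem stmt_0 (A1 B1 A2 B2 : EuclideanSpace ℝ (Fin 3))
    (h1 : dist A1 B1 = dist A2 B2) (h2 : dist B1 A2 = dist B2 A1)
    (NA NB : EuclideanSpace ℝ (Fin 3))
    (hNA : NA = midpoint ℝ A1 A2) (hNB : NB = midpoint ℝ B1 B2)
    (hne : NA ≠ NB) :
    inner ℝ (NB - NA) (A2 - A1) = (0 : ℝ) :=
  stmt_0_general A1 B1 A2 B2 h1 h2 NA NB hNA hNB
end

section
/- Let A1, B1, A2, B2 be four points in R^3 with |A1B1| = |A2B2| and |B1A2| = |B2A1|. Let N_A be the midpoint of A1A2 and N_B the midpoint of B1B2, with N_A ≠ N_B. Then the rotation of R^3 by 180 degrees about the line through N_A and N_B maps A1 to A2, A2 to A1, B1 to B2, and B2 to B1. -/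
/-!
Expanding squared norms, the two distance conditions force `A₁ - A₂` and `B₁ - B₂` to be
orthogonal to the axis `N_A N_B`. On the plane through a point `m` of the axis perpendicular to
it, the rotation is the point reflection through `m`; with `m = N_A` it swaps `A₁, A₂`, and with
`m = N_B` it swaps `B₁, B₂`.
-/

/-- Rotation of `ℝ³` by 180° about the line through `a` with direction `d`:
it fixes the line pointwise and acts as a point reflection (through the
intersection point with the line) on each plane perpendicular to the line.
Equivalently, `x ↦ 2 • (orthogonal projection of x onto the line) - x`. -/
noncomputable def rot180 (a d : EuclideanSpace ℝ (Fin 3)) (x : EuclideanSpace ℝ (Fin 3)) :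
    EuclideanSpace ℝ (Fin 3) :=
  (2 : ℝ) • (a + ((inner ℝ (x - a) d / inner ℝ d d : ℝ) • d)) - x

open RealInnerProductSpace

section Orthogonality

variable {V : Type*} [NormedAddCommGroup V] [InnerProductSpace ℝ V]

theorem two_mul_inner_sub_add_sub_add (A₁ B₁ A₂ B₂ : V) :
    2 * ⟪A₁ - A₂, (B₁ + B₂) - (A₁ + A₂)⟫ =
      ‖A₂ - B₂‖ ^ 2 - ‖A₁ - B₁‖ ^ 2 + ‖B₁ - A₂‖ ^ 2 - ‖B₂ - A₁‖ ^ 2 := by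
  simp only [← real_inner_self_eq_norm_sq, inner_sub_left, inner_sub_right,
    inner_add_right]
  rw [real_inner_comm A₁ B₁, real_inner_comm A₂ B₁, real_inner_comm A₁ B₂,
    real_inner_comm A₂ B₂, real_inner_comm A₁ A₂]
  ring

theorem inner_sub_midpoint_sub_midpoint_eq_zero {A₁ B₁ A₂ B₂ : V}
    (h₁ : dist A₁ B₁ = dist A₂ B₂) (h₂ : dist B₁ A₂ = dist B₂ A₁) :
    ⟪A₁ - A₂, midpoint ℝ B₁ B₂ - midpoint ℝ A₁ A₂⟫ = 0 := by
  have key : ⟪A₁ - A₂, (B₁ + B₂) - (A₁ + A₂)⟫ = 0 := by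
    have := two_mul_inner_sub_add_sub_add A₁ B₁ A₂ B₂
    simp only [← dist_eq_norm, h₁, h₂] at this
    linarith
  rw [midpoint_eq_smul_add, midpoint_eq_smul_add, ← smul_sub, inner_smul_right, key, mul_zero]

end Orthogonality

theorem rot180_eq_of_midpoint_eq {a d x y : EuclideanSpace ℝ (Fin 3)} (hd : d ≠ 0) {t : ℝ}
    (hm : midpoint ℝ x y = a + t • d) (horth : ⟪x - y, d⟫ = 0) : rot180 a d x = y := by
  have hx : x - a = (2⁻¹ : ℝ) • (x - y) + t • d := by
    rw [← add_sub_cancel_left a (t • d), ← hm, midpoint_eq_smul_add, invOf_eq_inv]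
    module
  have hproj : ⟪x - a, d⟫ / ⟪d, d⟫ = t := by
    rw [hx, inner_add_left, real_inner_smul_left, real_inner_smul_left, horth, mul_zero,
      zero_add]
    exact mul_div_cancel_right₀ t (inner_self_ne_zero.2 hd)
  rw [rot180, hproj, ← hm, midpoint_eq_smul_add, invOf_eq_inv]
  module

theorem rot180_swap_of_midpoint_eq {a d x y : EuclideanSpace ℝ (Fin 3)} (hd : d ≠ 0) {t : ℝ}
    (hm : midpoint ℝ x y = a + t • d) (horth : ⟪x - y, d⟫ = 0) :
    rot180 a d x = y ∧ rot180 a d y = x := by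
  refine ⟨rot180_eq_of_midpoint_eq hd hm horth, rot180_eq_of_midpoint_eq hd (t := t) ?_ ?_⟩
  · rwa [midpoint_comm]
  · rwa [← neg_sub, inner_neg_left, neg_eq_zero]

theorem stmt_1 (A1 B1 A2 B2 : EuclideanSpace ℝ (Fin 3))
    (h1 : dist A1 B1 = dist A2 B2) (h2 : dist B1 A2 = dist B2 A1)
    (NA NB : EuclideanSpace ℝ (Fin 3))
    (hNA : NA = midpoint ℝ A1 A2) (hNB : NB = midpoint ℝ B1 B2)
    (hne : NA ≠ NB) :
    rot180 NA (NB - NA) A1 = A2 ∧ rot180 NA (NB - NA) A2 = A1 ∧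
      rot180 NA (NB - NA) B1 = B2 ∧ rot180 NA (NB - NA) B2 = B1 := by
  have hd : NB - NA ≠ 0 := sub_ne_zero.2 hne.symm
  have hA : ⟪A1 - A2, NB - NA⟫ = 0 := by
    rw [hNA, hNB]
    exact inner_sub_midpoint_sub_midpoint_eq_zero h1 h2
  have hB : ⟪B1 - B2, NB - NA⟫ = 0 := by
    rw [← neg_eq_zero, ← inner_neg_right, neg_sub, hNA, hNB, midpoint_comm A1 A2]
    exact inner_sub_midpoint_sub_midpoint_eq_zero h2 h1.symm
  obtain ⟨hA1, hA2⟩ :=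
    rot180_swap_of_midpoint_eq (a := NA) hd (t := 0) (by rw [zero_smul, add_zero, hNA]) hA
  obtain ⟨hB1, hB2⟩ :=
    rot180_swap_of_midpoint_eq (a := NA) hd (t := 1) (by rw [one_smul, add_sub_cancel, hNB]) hB
  exact ⟨hA1, hA2, hB1, hB2⟩
end

section
/- Let y1, y2, y3, z1, z2 ∈ R^3 and define V(a,b,c,d) = det(b−a, c−a, d−a). Suppose V(y1,y2,y3,z1) and V(y1,y2,y3,z2) are nonzero with opposite signs, and suppose the three numbers V(z1,z2,y1,y2), V(z1,z2,y2,y3), V(z1,z2,y3,y1) are all nonzero and all have the same sign. Then the closed segment [z1,z2] intersects the closed triangle with vertices y1, y2, y3. -/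
/-- Six times the oriented volume of the tetrahedron `a b c d` in `ℝ³`. -/
noncomputable def orientedVol6 (a b c d : Fin 3 → ℝ) : ℝ :=
  Matrix.det (Matrix.of ![b - a, c - a, d - a])

/-!
Write `d₁ = V(y₁,y₂,y₃,z₁)`, `d₂ = V(y₁,y₂,y₃,z₂)` and `Vᵢⱼ = V(z₁,z₂,yᵢ,yⱼ)`. Expanding the
determinants gives the Cramer-type identities `V₁₂ + V₂₃ + V₃₁ = d₂ - d₁` and
`d₂ z₁ - d₁ z₂ = V₂₃ y₁ + V₃₁ y₂ + V₁₂ y₃`. Dividing by `d₂ - d₁` exhibits one point both as a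
combination of `z₁, z₂` with weights `d₂, -d₁` and of `y₁, y₂, y₃` with weights `V₂₃, V₃₁, V₁₂`;
the sign hypotheses say exactly that each family of weights has constant sign, so both
combinations are convex.
-/

section CenterMass

variable {𝕜 E ι : Type*} [Field 𝕜] [LinearOrder 𝕜] [IsStrictOrderedRing 𝕜]
  [AddCommGroup E] [Module 𝕜 E]

theorem Finset.centerMass_mem_convexHull_of_mul_sum_nonneg {t : Finset ι} {w : ι → 𝕜}
    {z : ι → E} {s : Set E} (hw : ∀ i ∈ t, 0 ≤ w i * ∑ j ∈ t, w j) (hsum : ∑ j ∈ t, w j ≠ 0)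
    (hz : ∀ i ∈ t, z i ∈ s) : t.centerMass w z ∈ convexHull 𝕜 s := by
  rw [← t.centerMass_smul_left (w := w) (z := z) hsum]
  refine t.centerMass_mem_convexHull (fun i hi => ?_) ?_ hz
  · simpa [mul_comm] using hw i hi
  · simpa [← Finset.mul_sum] using mul_self_pos.mpr hsum

theorem smul_sub_smul_mem_segment {a b : 𝕜} (x y : E) (hab : a * b < 0) :
    (b - a)⁻¹ • (b • x - a • y) ∈ segment 𝕜 x y := by
  have hb : 0 < b * (b - a) := by nlinarith [mul_self_nonneg b]
  have ha : 0 < -a * (b - a) := by nlinarith [mul_self_nonneg a]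
  have h := Finset.centerMass_mem_convexHull_of_mul_sum_nonneg (t := Finset.univ)
    (w := ![b, -a]) (z := ![x, y]) (s := {x, y})
    (fun i _ => by
      fin_cases i <;>
        simp only [Fin.zero_eta, Fin.mk_one, Matrix.cons_val_zero, Matrix.cons_val_one,
          Matrix.cons_val_fin_one, Fin.sum_univ_two] <;>
        linarith)
    (by simpa [Fin.sum_univ_two, ← sub_eq_add_neg] using right_ne_zero_of_mul hb.ne')
    (fun i _ => by fin_cases i <;> simp)
  rw [convexHull_pair] at h
  simpa [Finset.centerMass, Fin.sum_univ_two, sub_eq_add_neg, neg_smul] using h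

theorem smul_add_smul_add_smul_mem_convexHull {a b c : 𝕜} (x y z : E) (hca : 0 < c * a)
    (hab : 0 < a * b) : (a + b + c)⁻¹ • (a • x + b • y + c • z) ∈ convexHull 𝕜 {x, y, z} := by
  have hbc : 0 < b * c := by nlinarith [mul_pos hca hab, mul_self_nonneg a]
  have ha : 0 < a * (a + b + c) := by nlinarith [mul_self_nonneg a]
  have h := Finset.centerMass_mem_convexHull_of_mul_sum_nonneg (t := Finset.univ)
    (w := ![a, b, c]) (z := ![x, y, z]) (s := {x, y, z})
    (fun i _ => by
      fin_cases i <;>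
        simp only [Fin.zero_eta, Fin.mk_one, Fin.reduceFinMk, Matrix.cons_val_zero,
          Matrix.cons_val_one, Matrix.cons_val, Fin.sum_univ_three] <;>
        nlinarith)
    (by simpa [Fin.sum_univ_three] using right_ne_zero_of_mul ha.ne')
    (fun i _ => by fin_cases i <;> simp)
  simpa [Finset.centerMass, Fin.sum_univ_three, add_assoc] using h

end CenterMass

theorem orientedVol6_cyclic_sum (y1 y2 y3 z1 z2 : Fin 3 → ℝ) :
    orientedVol6 z1 z2 y2 y3 + orientedVol6 z1 z2 y3 y1 + orientedVol6 z1 z2 y1 y2 =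
      orientedVol6 y1 y2 y3 z2 - orientedVol6 y1 y2 y3 z1 := by
  simp only [orientedVol6, Matrix.det_fin_three, Matrix.of_apply, Matrix.cons_val', Pi.sub_apply,
    Matrix.cons_val_fin_one, Matrix.cons_val_zero, Matrix.cons_val_one, Matrix.cons_val]
  ring

theorem orientedVol6_smul_sub_smul (y1 y2 y3 z1 z2 : Fin 3 → ℝ) :
    orientedVol6 y1 y2 y3 z2 • z1 - orientedVol6 y1 y2 y3 z1 • z2 =
      orientedVol6 z1 z2 y2 y3 • y1 + orientedVol6 z1 z2 y3 y1 • y2 +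
        orientedVol6 z1 z2 y1 y2 • y3 := by
  ext i
  fin_cases i <;>
    simp only [orientedVol6, Matrix.det_fin_three, Matrix.of_apply, Matrix.cons_val', Pi.sub_apply,
      Matrix.cons_val_fin_one, Matrix.cons_val_zero, Matrix.cons_val_one, Matrix.cons_val,
      Fin.zero_eta, Fin.mk_one, Fin.reduceFinMk, Pi.smul_apply, smul_eq_mul, Pi.add_apply] <;>
    ring

theorem stmt_4 (y1 y2 y3 z1 z2 : Fin 3 → ℝ)
    (hopp : orientedVol6 y1 y2 y3 z1 * orientedVol6 y1 y2 y3 z2 < 0)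
    (hsame : orientedVol6 z1 z2 y1 y2 * orientedVol6 z1 z2 y2 y3 > 0 ∧
      orientedVol6 z1 z2 y2 y3 * orientedVol6 z1 z2 y3 y1 > 0) :
    (segment ℝ z1 z2 ∩ convexHull ℝ {y1, y2, y3}).Nonempty := by
  have hsegment := smul_sub_smul_mem_segment z1 z2 hopp
  have htriangle := smul_add_smul_add_smul_mem_convexHull y1 y2 y3 hsame.1 hsame.2
  rw [orientedVol6_cyclic_sum, ← orientedVol6_smul_sub_smul] at htriangle
  exact ⟨_, hsegment, htriangle⟩
end

section
/- Let y1, y2, y3, z1, z2 ∈ R^3 and define V(a,b,c,d) = det(b−a, c−a, d−a). Suppose V(y1,y2,y3,z1) and V(y1,y2,y3,z2) are nonzero with opposite signs, and the numbers V(z1,z2,y1,y2), V(z1,z2,y2,y3), V(z1,z2,y3,y1) are all nonzero but do not all have the same sign. Then the closed segment [z1,z2] does not intersect the closed triangle with vertices y1, y2, y3. -/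
open Matrix

theorem LinearMap.IsAlt.mul_apply_eq_of_add_add_eq_zero {R M : Type*} [CommRing R]
    [AddCommGroup M] [Module R M] {B : M →ₗ[R] M →ₗ[R] R} (hB : B.IsAlt) {a₁ a₂ a₃ : M}
    {α β γ : R} (h : α • a₁ + β • a₂ + γ • a₃ = 0) :
    γ * B a₂ a₃ = α * B a₁ a₂ := by
  have ha₃ : γ • a₃ = -(α • a₁) - β • a₂ := by rw [← sub_eq_zero, ← h]; abel
  calc γ * B a₂ a₃ = B a₂ (γ • a₃) := by rw [map_smul, smul_eq_mul]
    _ = -(α * B a₂ a₁) - β * B a₂ a₂ := by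
      simp only [ha₃, map_sub, map_neg, map_smul, smul_eq_mul]
    _ = α * B a₁ a₂ := by rw [hB.self_eq_zero, ← hB.neg]; ring

theorem nonneg_or_nonpos_of_cyclic_mul_eq {K : Type*} [Field K] [LinearOrder K]
    [IsStrictOrderedRing K] {α β γ W₁ W₂ W₃ : K} (hα : 0 ≤ α) (hβ : 0 ≤ β) (hγ : 0 ≤ γ)
    (hsum : 0 < α + β + γ) (h₁ : γ * W₂ = α * W₁) (h₂ : α * W₃ = β * W₂)
    (h₃ : β * W₁ = γ * W₃) :
    (0 ≤ W₁ ∧ 0 ≤ W₂ ∧ 0 ≤ W₃) ∨ (W₁ ≤ 0 ∧ W₂ ≤ 0 ∧ W₃ ≤ 0) := by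
  -- `(W₁, W₂, W₃)` is a multiple of `(γ, α, β)`, by a factor with the sign of `S`.
  set S := γ * W₁ + α * W₂ + β * W₃
  have hQ : 0 < α ^ 2 + β ^ 2 + γ ^ 2 := by
    nlinarith [sq_nonneg (α - β), sq_nonneg (β - γ), sq_nonneg (α - γ), mul_pos hsum hsum]
  have e₁ : (α ^ 2 + β ^ 2 + γ ^ 2) * W₁ = γ * S := by linear_combination β * h₃ - α * h₁
  have e₂ : (α ^ 2 + β ^ 2 + γ ^ 2) * W₂ = α * S := by linear_combination γ * h₁ - β * h₂
  have e₃ : (α ^ 2 + β ^ 2 + γ ^ 2) * W₃ = β * S := by linear_combination α * h₂ - γ * h₃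
  rcases le_total 0 S with hS | hS
  · refine .inl ⟨?_, ?_, ?_⟩ <;> refine nonneg_of_mul_nonneg_right ?_ hQ
    · exact e₁ ▸ mul_nonneg hγ hS
    · exact e₂ ▸ mul_nonneg hα hS
    · exact e₃ ▸ mul_nonneg hβ hS
  · refine .inr ⟨?_, ?_, ?_⟩ <;> refine nonpos_of_mul_nonpos_right ?_ hQ
    · exact e₁ ▸ mul_nonpos_of_nonneg_of_nonpos hγ hS
    · exact e₂ ▸ mul_nonpos_of_nonneg_of_nonpos hα hS
    · exact e₃ ▸ mul_nonpos_of_nonneg_of_nonpos hβ hS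

theorem exists_weighted_sum_sub_eq_zero_of_mem_convexHull_triple
    {𝕜 E : Type*} [Field 𝕜] [LinearOrder 𝕜] [IsStrictOrderedRing 𝕜] [AddCommGroup E]
    [Module 𝕜 E] {a b c p : E} (hp : p ∈ convexHull 𝕜 {a, b, c}) :
    ∃ α β γ : 𝕜, 0 ≤ α ∧ 0 ≤ β ∧ 0 ≤ γ ∧ α + β + γ = 1 ∧
      α • (a - p) + β • (b - p) + γ • (c - p) = 0 := by
  rw [← convexJoin_segment_singleton, mem_convexJoin] at hp
  obtain ⟨q, ⟨s, t, hs, ht, hst, rfl⟩, c', hc', u, w, hu, hw, huw, rfl⟩ := hp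
  rw [Set.mem_singleton_iff] at hc'
  subst c'
  refine ⟨u * s, u * t, w, mul_nonneg hu hs, mul_nonneg hu ht, hw, ?_, ?_⟩
  · linear_combination u * hst + huw
  · linear_combination (norm := module)
      (-u) • hst • (u • (s • a + t • b) + w • c) - huw • (u • (s • a + t • b) + w • c)

theorem det_of_fin_three_rows {R : Type*} [CommRing R] (u a b : Fin 3 → R) :
    (of ![u, a, b]).det = u 0 * a 1 * b 2 - u 0 * a 2 * b 1 - u 1 * a 0 * b 2
      + u 1 * a 2 * b 0 + u 2 * a 0 * b 1 - u 2 * a 1 * b 0 :=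
  det_fin_three _

noncomputable def detForm {R : Type*} [CommRing R] (v : Fin 3 → R) :
    (Fin 3 → R) →ₗ[R] (Fin 3 → R) →ₗ[R] R :=
  LinearMap.mk₂ R (fun a b ↦ (of ![v, a, b]).det)
    (fun _ _ _ ↦ by simp only [det_of_fin_three_rows, Pi.add_apply]; ring)
    (fun _ _ _ ↦ by simp only [det_of_fin_three_rows, Pi.smul_apply, smul_eq_mul]; ring)
    (fun _ _ _ ↦ by simp only [det_of_fin_three_rows, Pi.add_apply]; ring)
    (fun _ _ _ ↦ by simp only [det_of_fin_three_rows, Pi.smul_apply, smul_eq_mul]; ring)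

theorem detForm_isAlt {R : Type*} [CommRing R] (v : Fin 3 → R) : (detForm v).IsAlt :=
  fun a ↦ det_zero_of_row_eq (M := of ![v, a, a]) (i := 1) (j := 2) (by decide) rfl

theorem orientedVol6_eq_detForm (a b c d : Fin 3 → ℝ) (t : ℝ) :
    orientedVol6 a b c d =
      detForm (b - a) (c - (a + t • (b - a))) (d - (a + t • (b - a))) := by
  simp only [orientedVol6, detForm, LinearMap.mk₂_apply, det_of_fin_three_rows, Pi.sub_apply,
    Pi.add_apply, Pi.smul_apply, smul_eq_mul]
  ring

theorem stmt_5_general (y1 y2 y3 z1 z2 : Fin 3 → ℝ)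
    (hne : orientedVol6 z1 z2 y1 y2 ≠ 0 ∧ orientedVol6 z1 z2 y2 y3 ≠ 0 ∧
      orientedVol6 z1 z2 y3 y1 ≠ 0)
    (hnotsame : ¬ (0 < orientedVol6 z1 z2 y1 y2 ∧ 0 < orientedVol6 z1 z2 y2 y3 ∧
        0 < orientedVol6 z1 z2 y3 y1) ∧
      ¬ (orientedVol6 z1 z2 y1 y2 < 0 ∧ orientedVol6 z1 z2 y2 y3 < 0 ∧
        orientedVol6 z1 z2 y3 y1 < 0)) :
    segment ℝ z1 z2 ∩ convexHull ℝ {y1, y2, y3} = ∅ := by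
  refine Set.eq_empty_iff_forall_notMem.2 fun p ⟨hseg, htri⟩ ↦ ?_
  rw [segment_eq_image'] at hseg
  obtain ⟨t, -, rfl⟩ := hseg
  obtain ⟨α, β, γ, hα, hβ, hγ, hsum, hcomb⟩ :=
    exists_weighted_sum_sub_eq_zero_of_mem_convexHull_triple htri
  simp only [orientedVol6_eq_detForm z1 z2 _ _ t] at hne hnotsame
  have hB := detForm_isAlt (z2 - z1)
  rcases nonneg_or_nonpos_of_cyclic_mul_eq hα hβ hγ (by linarith)
    (hB.mul_apply_eq_of_add_add_eq_zero hcomb)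
    (hB.mul_apply_eq_of_add_add_eq_zero (by rw [← hcomb]; abel))
    (hB.mul_apply_eq_of_add_add_eq_zero (by rw [← hcomb]; abel))
    with ⟨h₁, h₂, h₃⟩ | ⟨h₁, h₂, h₃⟩
  · exact hnotsame.1 ⟨h₁.lt_of_ne' hne.1, h₂.lt_of_ne' hne.2.1, h₃.lt_of_ne' hne.2.2⟩
  · exact hnotsame.2 ⟨h₁.lt_of_ne hne.1, h₂.lt_of_ne hne.2.1, h₃.lt_of_ne hne.2.2⟩

theorem stmt_5 (y1 y2 y3 z1 z2 : Fin 3 → ℝ)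
    (hopp : orientedVol6 y1 y2 y3 z1 * orientedVol6 y1 y2 y3 z2 < 0)
    (hne : orientedVol6 z1 z2 y1 y2 ≠ 0 ∧ orientedVol6 z1 z2 y2 y3 ≠ 0 ∧
      orientedVol6 z1 z2 y3 y1 ≠ 0)
    (hnotsame : ¬ (0 < orientedVol6 z1 z2 y1 y2 ∧ 0 < orientedVol6 z1 z2 y2 y3 ∧
        0 < orientedVol6 z1 z2 y3 y1) ∧
      ¬ (orientedVol6 z1 z2 y1 y2 < 0 ∧ orientedVol6 z1 z2 y2 y3 < 0 ∧
        orientedVol6 z1 z2 y3 y1 < 0)) :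
    segment ℝ z1 z2 ∩ convexHull ℝ {y1, y2, y3} = ∅ :=
  stmt_5_general y1 y2 y3 z1 z2 hne hnotsame
end
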